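/- arXiv:2409.12571 — 2 statements merged into one kernel-verified Lean document; each statement's English description precedes it below -/
import Mathlib

section
/- Let p > 1 and let u : [0,∞) → ℝ be continuously differentiable with compact support and u(0) = 0. Then ∫₀^∞ |u'(x)|^p dx ≥ ((p-1)/p)^p ∫₀^∞ |u(x)|^p / x^p dx. -/
/-!
Write `h x = u x / x`, so that `|u x| ^ p / x ^ p = |h x| ^ p`. As `u 0 = 0` and `u'` is bounded,
`h` is bounded, so `x * |h x| ^ p` vanishes at `0` and at infinity. Its derivative is
`p |h| ^ (p - 2) h u' - (p - 1) |h| ^ p`, hence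
`(p - 1) ∫ |h| ^ p = p ∫ |h| ^ (p - 2) h u' ≤ p ∫ |h| ^ (p - 1) |u'|`.
Hölder's inequality with exponents `p / (p - 1)` and `p` bounds the right-hand side by
`p (∫ |h| ^ p) ^ ((p - 1) / p) (∫ |u'| ^ p) ^ (1 / p)`, and dividing gives the inequality.
-/

open MeasureTheory Real Set Filter Topology

lemma abs_rpow_sub_two_mul_self_mul_self {p : ℝ} (hp : p ≠ 0) (t : ℝ) :
    |t| ^ (p - 2) * t * t = |t| ^ p := by
  rw [mul_assoc, ← abs_mul_abs_self, ← sq, ← rpow_natCast,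
    ← rpow_add' (abs_nonneg t) (by simpa)]
  norm_num

lemma abs_abs_rpow_sub_two_mul_self {p : ℝ} (hp : p ≠ 1) (t : ℝ) :
    |(|t| ^ (p - 2) * t)| = |t| ^ (p - 1) := by
  rw [abs_mul, abs_of_nonneg (by positivity),
    ← rpow_add_one' (abs_nonneg t) (by contrapose! hp; linarith)]
  ring_nf

lemma le_rpow_mul_of_le_mul_rpow {p q A B : ℝ} (hpq : p.HolderConjugate q) (hA : 0 ≤ A)
    (hB : 0 ≤ B) (h : A ≤ q * (A ^ (1 / q) * B ^ (1 / p))) : A ≤ q ^ p * B := by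
  rcases hA.eq_or_lt with rfl | hA
  · have := hpq.symm.nonneg
    positivity
  have hsplit : A = A ^ (1 / q) * A ^ (1 / p) := by
    rw [← rpow_add hA, add_comm, one_div, one_div, hpq.inv_add_inv_eq_one, rpow_one]
  have hroot : A ^ (1 / p) ≤ q * B ^ (1 / p) := by
    refine le_of_mul_le_mul_left ?_ (rpow_pos_of_pos hA (1 / q))
    rw [← hsplit]
    linarith
  calc A = (A ^ (1 / p)) ^ p := by rw [← rpow_mul hA.le, one_div_mul_cancel hpq.ne_zero, rpow_one]
    _ ≤ (q * B ^ (1 / p)) ^ p := by have := hpq.nonneg; gcongr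
    _ = q ^ p * B := by
      rw [mul_rpow hpq.symm.nonneg (by positivity), ← rpow_mul hB, one_div_mul_cancel hpq.ne_zero,
        rpow_one]

lemma HasCompactSupport.integrable_of_bound {X E : Type*} [TopologicalSpace X]
    [MeasurableSpace X] [NormedAddCommGroup E] {μ : Measure X} [IsFiniteMeasureOnCompacts μ]
    {f : X → E} (hf : HasCompactSupport f) (hmeas : AEStronglyMeasurable f μ) (C : ℝ)
    (hC : ∀ x, ‖f x‖ ≤ C) : Integrable f μ :=
  memLp_one_iff_integrable.1 (hf.memLp_of_bound hmeas C (ae_of_all _ hC))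

section

variable {p : ℝ} {u : ℝ → ℝ} {M : ℝ}

lemma abs_div_self_le_of_abs_deriv_le (hu : Differentiable ℝ u) (hu0 : u 0 = 0)
    (hM : ∀ x, |deriv u x| ≤ M) (x : ℝ) : |u x / x| ≤ M := by
  have hM0 : 0 ≤ M := (abs_nonneg _).trans (hM 0)
  have hlip := Convex.norm_image_sub_le_of_norm_deriv_le (fun y _ => hu y) (fun y _ => hM y)
    convex_univ (mem_univ 0) (mem_univ x)
  simp only [hu0, sub_zero, norm_eq_abs] at hlip
  rw [abs_div]
  exact div_le_of_le_mul₀ (abs_nonneg x) hM0 hlip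

lemma hasDerivAt_mul_abs_div_self_rpow (hp : 1 < p) {x : ℝ} (hx : x ≠ 0)
    (hu : DifferentiableAt ℝ u x) :
    HasDerivAt (fun y => y * |u y / y| ^ p)
      (p * (|u x / x| ^ (p - 2) * (u x / x) * deriv u x) - (p - 1) * |u x / x| ^ p) x := by
  have hquot : HasDerivAt (fun y => u y / y) ((deriv u x * x - u x * 1) / x ^ 2) x :=
    hu.hasDerivAt.div (hasDerivAt_id' x) hx
  refine ((hasDerivAt_id' x).mul
    ((hasDerivAt_abs_rpow (u x / x) hp).comp (h := fun y => u y / y) x hquot)).congr_deriv ?_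
  have key := abs_rpow_sub_two_mul_self_mul_self (by positivity : p ≠ 0) (u x / x)
  simp only [Function.comp_apply]
  field_simp
  field_simp at key
  linear_combination (-p) * key

lemma memLp_abs_div_self_rpow (hu : Continuous u) (hc : HasCompactSupport u)
    (hquot : ∀ x, |u x / x| ≤ M) {r : ℝ} (hr : 0 < r) (q : ENNReal) (μ : Measure ℝ)
    [IsFiniteMeasureOnCompacts μ] : MemLp (fun x => |u x / x| ^ r) q μ := by
  refine (hc.mono fun x hx hux => hx (by simp [hux, zero_rpow hr.ne'])).memLp_of_bound
    ((hu.measurable.div measurable_id).abs.pow_const r).aestronglyMeasurable (M ^ r)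
    (ae_of_all _ fun x => ?_)
  rw [norm_of_nonneg (by positivity)]
  gcongr
  exact hquot x

lemma integrable_abs_div_self_rpow_sub_two_mul_deriv (hp : 1 < p) (hu : Continuous u)
    (hc : HasCompactSupport u) (hM : ∀ x, |deriv u x| ≤ M) (hquot : ∀ x, |u x / x| ≤ M) :
    Integrable fun x => |u x / x| ^ (p - 2) * (u x / x) * deriv u x := by
  have hmeas : Measurable fun x => u x / x := hu.measurable.div measurable_id
  refine (hc.mono fun x hx hux => hx (by simp [hux])).integrable_of_bound
    ((hmeas.abs.pow_const _).mul hmeas |>.mul (measurable_deriv u)).aestronglyMeasurable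
    (M ^ (p - 1) * M) fun x => ?_
  rw [norm_eq_abs, abs_mul, abs_abs_rpow_sub_two_mul_self hp.ne']
  have hM0 : 0 ≤ M := (abs_nonneg _).trans (hM 0)
  have := hp.le
  gcongr
  exacts [hquot x, hM x]

lemma tendsto_mul_abs_div_self_rpow_nhds_zero (hp : 0 < p) (hquot : ∀ x, |u x / x| ≤ M) :
    Tendsto (fun x => x * |u x / x| ^ p) (𝓝 0) (𝓝 0) := by
  refine squeeze_zero_norm (a := fun x => M ^ p * |x|) (fun x => ?_) ?_
  · rw [norm_mul, norm_eq_abs, norm_of_nonneg (by positivity), mul_comm]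
    gcongr
    exact hquot x
  · simpa using (continuous_abs.tendsto (0 : ℝ)).const_mul (M ^ p)

theorem integral_Ioi_abs_div_self_rpow_eq (hp : 1 < p) (hu : ContDiff ℝ 1 u)
    (hc : HasCompactSupport u) (hu0 : u 0 = 0) :
    (p - 1) * ∫ x in Ioi 0, |u x / x| ^ p =
      p * ∫ x in Ioi 0, |u x / x| ^ (p - 2) * (u x / x) * deriv u x := by
  have hp0 : 0 < p := by linarith
  obtain ⟨M, hM⟩ := (hu.continuous_deriv le_rfl).bounded_above_of_compact_support hc.deriv
  have hud := hu.differentiable one_ne_zero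
  have hquot := abs_div_self_le_of_abs_deriv_le hud hu0 hM
  have hI1 := memLp_one_iff_integrable.1
    (memLp_abs_div_self_rpow hu.continuous hc hquot hp0 1 volume)
  have hI2 := integrable_abs_div_self_rpow_sub_two_mul_deriv hp hu.continuous hc hM hquot
  have hcont : ContinuousWithinAt (fun x => x * |u x / x| ^ p) (Ici 0) 0 := by
    simpa [ContinuousWithinAt] using
      (tendsto_mul_abs_div_self_rpow_nhds_zero hp0 hquot).mono_left nhdsWithin_le_nhds
  have htop : Tendsto (fun x => x * |u x / x| ^ p) atTop (𝓝 0) :=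
    (hc.mono fun x hx hux => hx (by simp [hux, zero_rpow hp0.ne'])).is_zero_at_infty.mono_left
      atTop_le_cocompact
  have hFTC := integral_Ioi_of_hasDerivAt_of_tendsto hcont
    (fun x hx => hasDerivAt_mul_abs_div_self_rpow hp (ne_of_gt hx) (hud x))
    ((hI2.const_mul p).sub (hI1.const_mul (p - 1))).integrableOn htop
  rw [integral_sub (hI2.const_mul p).integrableOn (hI1.const_mul (p - 1)).integrableOn,
    integral_const_mul, integral_const_mul] at hFTC
  simp only [zero_mul, sub_zero] at hFTC
  linarith

theorem integral_Ioi_abs_div_self_rpow_le {q : ℝ} (hpq : p.HolderConjugate q)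
    (hu : ContDiff ℝ 1 u) (hc : HasCompactSupport u) (hu0 : u 0 = 0) :
    ∫ x in Ioi 0, |u x / x| ^ p ≤ q ^ p * ∫ x in Ioi 0, |deriv u x| ^ p := by
  obtain ⟨M, hM⟩ := (hu.continuous_deriv le_rfl).bounded_above_of_compact_support hc.deriv
  have hquot := abs_div_self_le_of_abs_deriv_le (hu.differentiable one_ne_zero) hu0 hM
  have hHolder := integral_mul_le_Lp_mul_Lq_of_nonneg hpq.symm
    (ae_of_all _ fun x => by positivity) (ae_of_all _ fun x => abs_nonneg (deriv u x))
    (memLp_abs_div_self_rpow hu.continuous hc hquot hpq.sub_one_pos _ (volume.restrict (Ioi 0)))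
    ((hu.continuous_deriv le_rfl).abs.memLp_of_hasCompactSupport hc.deriv.abs)
  simp only [← rpow_mul (abs_nonneg _), hpq.sub_one_mul_conj] at hHolder
  have hq0 := hpq.symm.nonneg
  have hIBP : ∫ x in Ioi 0, |u x / x| ^ p ≤
      q * ∫ x in Ioi 0, |u x / x| ^ (p - 1) * |deriv u x| := by
    have heq := integral_Ioi_abs_div_self_rpow_eq hpq.lt hu hc hu0
    calc ∫ x in Ioi 0, |u x / x| ^ p
        = q * ∫ x in Ioi 0, |u x / x| ^ (p - 2) * (u x / x) * deriv u x := by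
          rw [hpq.conjugate_eq, div_mul_eq_mul_div, ← heq]
          field_simp [hpq.sub_one_ne_zero]
      _ ≤ q * ∫ x in Ioi 0, |u x / x| ^ (p - 1) * |deriv u x| := by
          refine mul_le_mul_of_nonneg_left ?_ hq0
          refine (le_abs_self _).trans (abs_integral_le_integral_abs.trans_eq ?_)
          simp only [abs_mul, abs_abs_rpow_sub_two_mul_self hpq.lt.ne']
  exact le_rpow_mul_of_le_mul_rpow hpq
    (setIntegral_nonneg measurableSet_Ioi fun x _ => by positivity)
    (setIntegral_nonneg measurableSet_Ioi fun x _ => by positivity) (hIBP.trans (by gcongr))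

end

theorem hardy_halfline (p : ℝ) (hp : 1 < p) (u : ℝ → ℝ)
    (hu : ContDiff ℝ 1 u) (hc : HasCompactSupport u) (hu0 : u 0 = 0) :
    ∫ x in Set.Ioi (0 : ℝ), |deriv u x| ^ p ≥
      ((p - 1) / p) ^ p * ∫ x in Set.Ioi (0 : ℝ), |u x| ^ p / x ^ p := by
  have hintegrand : ∫ x in Ioi 0, |u x| ^ p / x ^ p = ∫ x in Ioi 0, |u x / x| ^ p :=
    setIntegral_congr_fun measurableSet_Ioi fun x (hx : 0 < x) => by
      rw [abs_div, abs_of_pos hx, div_rpow (abs_nonneg _) hx.le]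
  have hconst : ((p - 1) / p) ^ p * p.conjExponent ^ p = 1 := by
    have hp0 : 0 < p := by linarith
    have hp1 : 0 < p - 1 := by linarith
    rw [conjExponent, ← mul_rpow (div_pos hp1 hp0).le (div_pos hp0 hp1).le,
      div_mul_div_cancel₀' hp1.ne', div_self hp0.ne', one_rpow]
  rw [ge_iff_le, hintegrand]
  calc ((p - 1) / p) ^ p * ∫ x in Ioi 0, |u x / x| ^ p
      ≤ ((p - 1) / p) ^ p * (p.conjExponent ^ p * ∫ x in Ioi 0, |deriv u x| ^ p) := by
        gcongr
        exact integral_Ioi_abs_div_self_rpow_le (.conjExponent hp) hu hc hu0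
    _ = ∫ x in Ioi 0, |deriv u x| ^ p := by rw [← mul_assoc, hconst, one_mul]
end

section
/- For n ≥ 1, α ∈ ℝ and u ∈ C¹_c(ℝⁿ \ {0}), one has ∫_{ℝⁿ} |∂_r u|² |x|^{−α} dx − ((n−2−α)/2)² ∫_{ℝⁿ} u² |x|^{−α−2} dx = ∫_{ℝⁿ} |∂_r u + (n−2−α)/(2|x|) · u|² |x|^{−α} dx, where ∂_r u = (x/|x|)·∇u is the radial derivative. -/
open MeasureTheory Real RealInnerProductSpace

noncomputable section

abbrev Euc (n : ℕ) := EuclideanSpace ℝ (Fin n)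

/-- radial derivative ∂_r f = (x/|x|)·∇f -/
noncomputable def rDeriv (n : ℕ) (f : Euc n → ℝ) (x : Euc n) : ℝ :=
  inner ℝ x (gradient f x) / ‖x‖

/-- T_α f = ∂_r f + ((n-2-α)/(2r)) f -/
noncomputable def Tw (n : ℕ) (α : ℝ) (f : Euc n → ℝ) (x : Euc n) : ℝ :=
  rDeriv n f x + (((n : ℝ) - 2 - α) / (2 * ‖x‖)) * f x

/-- spherical derivative L_j f = ∂_j f − (x_j/r) ∂_r f -/
noncomputable def Lop (n : ℕ) (j : Fin n) (f : Euc n → ℝ) (x : Euc n) : ℝ :=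
  fderiv ℝ f x (EuclideanSpace.single j 1) - (x j / ‖x‖) * rDeriv n f x

/-- Euclidean Laplacian as sum of second partial derivatives -/
noncomputable def lap (n : ℕ) (f : Euc n → ℝ) (x : Euc n) : ℝ :=
  ∑ j : Fin n,
    fderiv ℝ (fun y => fderiv ℝ f y (EuclideanSpace.single j 1)) x (EuclideanSpace.single j 1)

/-- radial Laplacian Δ_r = ∂_r² + ((n−1)/r) ∂_r -/
noncomputable def lapr (n : ℕ) (f : Euc n → ℝ) (x : Euc n) : ℝ :=
  rDeriv n (rDeriv n f) x + (((n : ℝ) - 1) / ‖x‖) * rDeriv n f x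

/-- weighted L² norm squared: ‖g‖_β² = ∫ |g|² |x|^{−β} -/
noncomputable def wnorm2 (n : ℕ) (β : ℝ) (g : Euc n → ℝ) : ℝ :=
  ∫ x : Euc n, (g x) ^ 2 * ‖x‖ ^ (-β)

end

/-!
Expanding the square gives
`‖T_α u‖_α² = ‖∂_r u‖_α² + (n-2-α) ∫ u ∂_r u |x|^{-α-1} + ((n-2-α)/2)² ‖u‖_{α+2}²`,
so the identity amounts to `2 ∫ u ∂_r u |x|^{-α-1} = -(n-2-α) ‖u‖_{α+2}²`. This is the divergence
theorem for the vector field `u² |x|^{-α-2} x`, which is `C¹` with compact support because `u`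
vanishes near the origin, and whose divergence is `(r ∂_r (u²) + (n-α-2) u²) |x|^{-α-2}`
since `div (|x|^s x) = (n+s) |x|^s`.
-/

theorem hasFDerivAt_norm_rpow_of_ne_zero {E : Type*} [NormedAddCommGroup E]
    [InnerProductSpace ℝ E] {x : E} (hx : x ≠ 0) (p : ℝ) :
    HasFDerivAt (fun y : E ↦ ‖y‖ ^ p) ((p * ‖x‖ ^ (p - 2)) • innerSL ℝ x) x := by
  convert ((hasStrictFDerivAt_norm_sq x).rpow_const (p := p / 2) (by simp [hx])).hasFDerivAt
    using 1
  · ext y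
    rw [← Real.rpow_natCast_mul (norm_nonneg y)]
    ring_nf
  · simp_rw [← Real.rpow_natCast_mul (norm_nonneg _), ← Nat.cast_smul_eq_nsmul ℝ, smul_smul]
    ring_nf

theorem ContDiff.mul_of_contDiffAt_tsupport {𝕜 F : Type*} [NontriviallyNormedField 𝕜]
    [NormedAddCommGroup F] [NormedSpace 𝕜 F] {k : WithTop ℕ∞} {f g : F → 𝕜}
    (hf : ContDiff 𝕜 k f) (hg : ∀ x ∈ tsupport f, ContDiffAt 𝕜 k g x) :
    ContDiff 𝕜 k fun x ↦ f x * g x := by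
  refine contDiff_iff_contDiffAt.2 fun x ↦ ?_
  by_cases hx : x ∈ tsupport f
  · exact hf.contDiffAt.mul (hg x hx)
  · refine contDiffAt_const (c := (0 : 𝕜)).congr_of_eventuallyEq ?_
    filter_upwards [notMem_tsupport_iff_eventuallyEq.1 hx] with y hy
    simp [hy]

section Integration

theorem integrable_mul_norm_rpow {E : Type*} [NormedAddCommGroup E] [MeasurableSpace E]
    [OpensMeasurableSpace E] {μ : Measure E} [IsFiniteMeasureOnCompacts μ]
    {g : E → ℝ} {K : Set E} (hK : IsCompact K) (h0 : (0 : E) ∉ K)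
    (hg : ContinuousOn g {0}ᶜ) (hgK : ∀ x ∉ K, g x = 0) (γ : ℝ) :
    Integrable (fun x ↦ g x * ‖x‖ ^ γ) μ := by
  have hweight : ContinuousOn (fun x : E ↦ ‖x‖ ^ γ) {0}ᶜ :=
    continuous_norm.continuousOn.rpow_const fun x hx ↦ .inl (norm_ne_zero_iff.2 hx)
  refine ((hg.mul hweight).mono fun x hx ↦ ne_of_mem_of_not_mem hx h0).integrableOn_compact hK
    |>.integrable_of_forall_notMem_eq_zero fun x hx ↦ by simp [hgK x hx]

variable {E : Type*} [NormedAddCommGroup E] [NormedSpace ℝ E] [MeasurableSpace E] [BorelSpace E]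
  {μ : Measure E} {F : E → ℝ}

theorem HasCompactSupport.integrable_fderiv_apply [IsFiniteMeasureOnCompacts μ]
    (hc : HasCompactSupport F) (hF : ContDiff ℝ 1 F) (v : E) :
    Integrable (fun x ↦ fderiv ℝ F x v) μ :=
  ((hF.continuous_fderiv one_ne_zero).clm_apply continuous_const).integrable_of_hasCompactSupport
    (hc.fderiv_apply ℝ v)

theorem HasCompactSupport.integral_fderiv_apply_eq_zero [FiniteDimensional ℝ E]
    [μ.IsAddHaarMeasure] (hc : HasCompactSupport F) (hF : ContDiff ℝ 1 F) (v : E) :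
    ∫ x, fderiv ℝ F x v ∂μ = 0 := by
  simpa using integral_mul_fderiv_eq_neg_fderiv_mul_of_integrable (μ := μ) (v := v)
    (f := fun _ ↦ (1 : ℝ)) (g := F) (by simp) (by simpa using hc.integrable_fderiv_apply hF v)
    (by simpa using hF.continuous.integrable_of_hasCompactSupport hc)
    (fun _ _ ↦ differentiableAt_const _) (fun x _ ↦ hF.differentiable one_ne_zero x)

end Integration

section Radial

variable {n : ℕ}

theorem rDeriv_eq_fderiv_div_norm (f : Euc n → ℝ) (x : Euc n) :
    rDeriv n f x = fderiv ℝ f x x / ‖x‖ := by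
  simp [rDeriv]

theorem continuousOn_rDeriv {f : Euc n → ℝ} (hf : ContDiff ℝ 1 f) :
    ContinuousOn (rDeriv n f) {0}ᶜ := by
  simp_rw [funext (rDeriv_eq_fderiv_div_norm f)]
  exact ((hf.continuous_fderiv one_ne_zero).clm_apply continuous_id).continuousOn.div
    continuous_norm.continuousOn fun x hx ↦ norm_ne_zero_iff.2 hx

theorem rDeriv_eq_zero_of_notMem_tsupport {f : Euc n → ℝ} {x : Euc n} (hx : x ∉ tsupport f) :
    rDeriv n f x = 0 := by
  simp [rDeriv_eq_fderiv_div_norm, fderiv_of_notMem_tsupport ℝ hx]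

theorem sum_coord_mul_apply_single (L : Euc n →L[ℝ] ℝ) (x : Euc n) :
    ∑ j, x j * L (EuclideanSpace.single j 1) = L x := by
  conv_rhs => rw [← (EuclideanSpace.basisFun (Fin n) ℝ).sum_repr x]
  simp [map_sum]

theorem sum_fderiv_coord_mul_norm_rpow {x : Euc n} (hx : x ≠ 0) (s : ℝ) :
    ∑ j, fderiv ℝ (fun y : Euc n ↦ y j * ‖y‖ ^ s) x (EuclideanSpace.single j 1)
      = (n + s) * ‖x‖ ^ s := by
  have hderiv (j : Fin n) : HasFDerivAt (fun y : Euc n ↦ y j * ‖y‖ ^ s)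
      (x j • (s * ‖x‖ ^ (s - 2)) • innerSL ℝ x + ‖x‖ ^ s • EuclideanSpace.proj j) x :=
    (EuclideanSpace.proj j).hasFDerivAt.fun_mul (hasFDerivAt_norm_rpow_of_ne_zero hx s)
  have hnorm : ‖x‖ ^ (s - 2) * ‖x‖ ^ 2 = ‖x‖ ^ s := by
    rw [← Real.rpow_natCast, ← Real.rpow_add (norm_pos_iff.2 hx)]
    norm_num
  have hsum : ∑ j, x j * (s * ‖x‖ ^ (s - 2) * x j) = s * ‖x‖ ^ (s - 2) * ‖x‖ ^ 2 := by
    simp_rw [EuclideanSpace.norm_sq_eq, Finset.mul_sum, Real.norm_eq_abs, sq_abs]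
    exact Finset.sum_congr rfl fun j _ ↦ by ring
  rw [Finset.sum_congr rfl fun j _ ↦ by rw [(hderiv j).fderiv]]
  simp [EuclideanSpace.inner_single_right, Finset.sum_add_distrib]
  linear_combination hsum + s * hnorm

theorem integral_fderiv_self_add_mul_norm_rpow_eq_zero [NeZero n] {w : Euc n → ℝ}
    (hw : ContDiff ℝ 1 w) (hc : HasCompactSupport w) (h0 : (0 : Euc n) ∉ tsupport w) (s : ℝ) :
    ∫ x, (fderiv ℝ w x x + (n + s) * w x) * ‖x‖ ^ s = 0 := by
  set φ : Fin n → Euc n → ℝ := fun j y ↦ y j * ‖y‖ ^ s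
  have hφ (j : Fin n) {x : Euc n} (hx : x ≠ 0) : ContDiffAt ℝ 1 (φ j) x :=
    (EuclideanSpace.proj j).contDiff.contDiffAt.mul
      ((contDiffAt_norm ℝ hx).rpow_const_of_ne (norm_ne_zero_iff.2 hx))
  set F : Fin n → Euc n → ℝ := fun j y ↦ w y * φ j y
  have hF (j : Fin n) : ContDiff ℝ 1 (F j) :=
    hw.mul_of_contDiffAt_tsupport fun x hx ↦ hφ j (ne_of_mem_of_not_mem hx h0)
  have hdiv {x : Euc n} (hx : x ≠ 0) :
      ∑ j, fderiv ℝ (F j) x (EuclideanSpace.single j 1)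
        = (fderiv ℝ w x x + (n + s) * w x) * ‖x‖ ^ s := by
    have hprod (j : Fin n) : fderiv ℝ (F j) x (EuclideanSpace.single j 1)
        = w x * fderiv ℝ (φ j) x (EuclideanSpace.single j 1)
          + ‖x‖ ^ s * (x j * fderiv ℝ w x (EuclideanSpace.single j 1)) := by
      rw [fderiv_fun_mul (hw.differentiable one_ne_zero x)
        ((hφ j hx).differentiableAt one_ne_zero)]
      simp only [φ, add_apply, smul_apply, smul_eq_mul]
      ring
    rw [Finset.sum_congr rfl fun j _ ↦ hprod j, Finset.sum_add_distrib, ← Finset.mul_sum,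
      ← Finset.mul_sum, sum_fderiv_coord_mul_norm_rpow hx, sum_coord_mul_apply_single]
    ring
  calc ∫ x, (fderiv ℝ w x x + (n + s) * w x) * ‖x‖ ^ s
      = ∫ x, ∑ j, fderiv ℝ (F j) x (EuclideanSpace.single j 1) :=
        integral_congr_ae <| (Measure.ae_ne volume 0).mono fun x hx ↦ (hdiv hx).symm
    _ = ∑ j, ∫ x, fderiv ℝ (F j) x (EuclideanSpace.single j 1) :=
        integral_finsetSum _ fun j _ ↦ hc.mul_right.integrable_fderiv_apply (hF j) _
    _ = 0 := Finset.sum_eq_zero fun j _ ↦ hc.mul_right.integral_fderiv_apply_eq_zero (hF j) _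

variable {u : Euc n → ℝ}

theorem integrable_sq_mul_norm_rpow (hu : Continuous u) (hc : HasCompactSupport u)
    (h0 : (0 : Euc n) ∉ tsupport u) (γ : ℝ) :
    Integrable (fun x ↦ u x ^ 2 * ‖x‖ ^ γ) :=
  integrable_mul_norm_rpow (g := fun x ↦ u x ^ 2) hc h0 (hu.pow 2).continuousOn
    (fun x hx ↦ by simp [image_eq_zero_of_notMem_tsupport hx]) γ

theorem integrable_mul_rDeriv_mul_norm_rpow (hu : ContDiff ℝ 1 u) (hc : HasCompactSupport u)
    (h0 : (0 : Euc n) ∉ tsupport u) (γ : ℝ) :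
    Integrable (fun x ↦ u x * rDeriv n u x * ‖x‖ ^ γ) :=
  integrable_mul_norm_rpow (g := fun x ↦ u x * rDeriv n u x) hc h0
    (hu.continuous.continuousOn.mul (continuousOn_rDeriv hu))
    (fun x hx ↦ by simp [image_eq_zero_of_notMem_tsupport hx]) γ

theorem integrable_rDeriv_sq_mul_norm_rpow (hu : ContDiff ℝ 1 u) (hc : HasCompactSupport u)
    (h0 : (0 : Euc n) ∉ tsupport u) (γ : ℝ) :
    Integrable (fun x ↦ rDeriv n u x ^ 2 * ‖x‖ ^ γ) :=
  integrable_mul_norm_rpow (g := fun x ↦ rDeriv n u x ^ 2) hc h0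
    ((continuousOn_rDeriv hu).pow 2)
    (fun x hx ↦ by simp [rDeriv_eq_zero_of_notMem_tsupport hx]) γ

theorem two_mul_integral_mul_rDeriv_mul_norm_rpow [NeZero n] (hu : ContDiff ℝ 1 u)
    (hc : HasCompactSupport u) (h0 : (0 : Euc n) ∉ tsupport u) (α : ℝ) :
    2 * ∫ x, u x * rDeriv n u x * ‖x‖ ^ (-(α + 1))
      = -((n : ℝ) - 2 - α) * wnorm2 n (α + 2) u := by
  have hsupp : tsupport (fun x ↦ u x ^ 2) ⊆ tsupport u :=
    tsupport_comp_subset (g := fun t : ℝ ↦ t ^ 2) (by simp) u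
  have hdiv := integral_fderiv_self_add_mul_norm_rpow_eq_zero (w := fun x ↦ u x ^ 2)
    (hu.pow 2) (hc.comp_left (g := fun t : ℝ ↦ t ^ 2) (by simp)) (fun h ↦ h0 (hsupp h))
    (-(α + 2))
  have hpointwise {x : Euc n} (hx : x ≠ 0) :
      (fderiv ℝ (fun y ↦ u y ^ 2) x x + (n + -(α + 2)) * u x ^ 2) * ‖x‖ ^ (-(α + 2))
        = 2 * (u x * rDeriv n u x * ‖x‖ ^ (-(α + 1)))
          + ((n : ℝ) - 2 - α) * (u x ^ 2 * ‖x‖ ^ (-(α + 2))) := by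
    have hr : ‖x‖ ≠ 0 := norm_ne_zero_iff.2 hx
    rw [fderiv_fun_pow 2 (hu.differentiable one_ne_zero x), rDeriv_eq_fderiv_div_norm,
      show -(α + 1) = -(α + 2) + 1 by ring, Real.rpow_add_one hr]
    field_simp
    simp only [smul_apply, smul_eq_mul]
    ring
  rw [integral_congr_ae ((Measure.ae_ne volume 0).mono fun x hx ↦ hpointwise hx),
    integral_add ((integrable_mul_rDeriv_mul_norm_rpow hu hc h0 _).const_mul 2)
      ((integrable_sq_mul_norm_rpow hu.continuous hc h0 _).const_mul _),
    integral_const_mul, integral_const_mul] at hdiv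
  rw [wnorm2]
  linarith

theorem sq_Tw_mul_norm_rpow (f : Euc n → ℝ) (α : ℝ) {x : Euc n} (hx : x ≠ 0) :
    Tw n α f x ^ 2 * ‖x‖ ^ (-α)
      = rDeriv n f x ^ 2 * ‖x‖ ^ (-α)
        + ((n : ℝ) - 2 - α) * (f x * rDeriv n f x * ‖x‖ ^ (-(α + 1)))
        + (((n : ℝ) - 2 - α) / 2) ^ 2 * (f x ^ 2 * ‖x‖ ^ (-(α + 2))) := by
  have hr : ‖x‖ ≠ 0 := norm_ne_zero_iff.2 hx
  have h1 : ‖x‖ ^ (-(α + 1)) = ‖x‖ ^ (-α) / ‖x‖ := by rw [← Real.rpow_sub_one hr]; ring_nf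
  have h2 : ‖x‖ ^ (-(α + 2)) = ‖x‖ ^ (-(α + 1)) / ‖x‖ := by
    rw [← Real.rpow_sub_one hr]; ring_nf
  rw [Tw, h2, h1]
  field_simp
  ring

end Radial

theorem radial_hardy_identity (n : ℕ) (hn : 1 ≤ n) (α : ℝ) (u : Euc n → ℝ)
    (hu : ContDiff ℝ 1 u) (hc : HasCompactSupport u) (h0 : (0 : Euc n) ∉ tsupport u) :
    wnorm2 n α (rDeriv n u) - (((n : ℝ) - 2 - α) / 2) ^ 2 * wnorm2 n (α + 2) u
      = wnorm2 n α (Tw n α u) := by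
  have : NeZero n := ⟨Nat.one_le_iff_ne_zero.1 hn⟩
  have hexpand : wnorm2 n α (Tw n α u) = wnorm2 n α (rDeriv n u)
      + ((n : ℝ) - 2 - α) * (∫ x, u x * rDeriv n u x * ‖x‖ ^ (-(α + 1)))
      + (((n : ℝ) - 2 - α) / 2) ^ 2 * wnorm2 n (α + 2) u := by
    rw [wnorm2, integral_congr_ae ((Measure.ae_ne volume 0).mono
        fun x hx ↦ sq_Tw_mul_norm_rpow u α hx),
      integral_add ((integrable_rDeriv_sq_mul_norm_rpow hu hc h0 _).fun_add
          ((integrable_mul_rDeriv_mul_norm_rpow hu hc h0 _).const_mul _))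
        ((integrable_sq_mul_norm_rpow hu.continuous hc h0 _).const_mul _),
      integral_add (integrable_rDeriv_sq_mul_norm_rpow hu hc h0 _)
        ((integrable_mul_rDeriv_mul_norm_rpow hu hc h0 _).const_mul _),
      integral_const_mul, integral_const_mul]
    rfl
  rw [hexpand]
  linear_combination
    (-((n : ℝ) - 2 - α) / 2) * two_mul_integral_mul_rDeriv_mul_norm_rpow hu hc h0 α
end
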